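/- arXiv:2407.19191 — 2 statements merged into one kernel-verified Lean document; each statement's English description precedes it below -/
import Mathlib

section
/- Suppose assumptions (A.1)–(A.3) hold and let H be a fixed simple undirected connected graph with vertex set [R]. For t ∈ {0,1,…,R} let E_t be the set of ordered pairs (s₁, s₂) of R-tuples in [N]_R whose component sets share exactly t elements. Then for every t ∈ {0,1,…,R}, N^{−(2R−1)} · Σ_{(s₁,s₂) ∈ E_t} Cov( Ψ_H(Y_N, s₁), Ψ_H(Y_N, s₂) ) → 0 as N → ∞, where Ψ_H(Y_N, s) = Π_{{i,j} ∈ E(H)} Y_{s_i,s_j}. (For t = 0 and t = 1 each covariance is zero; for t ≥ 2 the sum of covariances is nonnegative and of order O(N^{2R−t}).) -/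
/-!
For overlap `t ≤ 1` the products `Ψ_H(Y, s₁)` and `Ψ_H(Y, s₂)` are built from disjoint sets of
edge variables (a common edge needs two common vertices), so they are independent and every
covariance vanishes. For `t ≥ 2` each covariance of these `[0,1]`-valued variables is at most `1`
in absolute value, while a pair `(s₁, s₂)` is determined by the joint map
`Fin R ⊕ Fin R → Fin N`, whose image has `2R - t` points; such maps factor through
`Fin (2R - t)`, so there are `O(N^(2R-t)) = o(N^(2R-1))` of them.
-/

open MeasureTheory ProbabilityTheory Filter Finset
open scoped Classical Topology

noncomputable section

/-- Product of `f` over the edges of `H`, each edge `{i,j}` counted once via its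
representative with `i < j`. -/
def edgeProd {R : ℕ} (H : SimpleGraph (Fin R)) (f : Fin R → Fin R → ℝ) : ℝ :=
  ∏ q ∈ Finset.univ.filter (fun q : Fin R × Fin R => H.Adj q.1 q.2 ∧ q.1 < q.2), f q.1 q.2

/-- `Ψ_H(Y, s) = ∏_{{i,j}∈E(H)} Y_{s_i,s_j}`. -/
def PsiY {Ω : Type*} {R N : ℕ} (H : SimpleGraph (Fin R)) (Y : ℕ → ℕ → Ω → ℝ)
    (s : Fin R ↪ Fin N) (ω : Ω) : ℝ :=
  edgeProd H (fun i j => Y (s i) (s j) ω)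

/-- Covariance of two real random variables. -/
def cov {Ω : Type*} [MeasurableSpace Ω] (μ : MeasureTheory.Measure Ω)
    (X Z : Ω → ℝ) : ℝ :=
  (∫ ω, X ω * Z ω ∂μ) - (∫ ω, X ω ∂μ) * ∫ ω, Z ω ∂μ

/-- A map whose image has `m` elements factors through `Fin m`. -/
theorem card_filter_card_image_eq_le {α β : Type*} [Fintype α] [DecidableEq α] [Fintype β]
    [DecidableEq β] (m : ℕ) :
    #{f : α → β | #(univ.image f) = m} ≤ Fintype.card β ^ m * m ^ Fintype.card α := by
  calc #{f : α → β | #(univ.image f) = m}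
      ≤ #((univ : Finset ((Fin m → β) × (α → Fin m))).image fun gh => gh.1 ∘ gh.2) := by
        refine card_le_card fun f hf => ?_
        let e := Finset.equivFinOfCardEq (mem_filter.1 hf).2
        refine mem_image.2 ⟨(fun i => (e.symm i : β),
          fun a => e ⟨f a, mem_image_of_mem f (mem_univ a)⟩), mem_univ _, funext fun a => by simp⟩
    _ ≤ Fintype.card β ^ m * m ^ Fintype.card α := card_image_le.trans (by simp)

theorem card_image_sumElim {R N : ℕ} (s₁ s₂ : Fin R ↪ Fin N) :
    #(univ.image (Sum.elim s₁ s₂)) = 2 * R - #(univ.image s₁ ∩ univ.image s₂) := by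
  have hunion : univ.image (Sum.elim s₁ s₂) = univ.image s₁ ∪ univ.image s₂ := by
    ext x; simp [Sum.exists]
  rw [hunion, card_union, card_image_of_injective _ s₁.injective,
    card_image_of_injective _ s₂.injective, card_fin, two_mul]

theorem card_embedding_pairs_overlap_le (R N t : ℕ) :
    #{s : (Fin R ↪ Fin N) × (Fin R ↪ Fin N) | #(univ.image s.1 ∩ univ.image s.2) = t}
      ≤ N ^ (2 * R - t) * (2 * R - t) ^ (2 * R) := by
  calc _ ≤ #{f : Fin R ⊕ Fin R → Fin N | #(univ.image f) = 2 * R - t} := by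
        refine card_le_card_of_injOn (fun s => Sum.elim s.1 s.2) (fun s hs => ?_) ?_
        · simp only [coe_filter, mem_univ, true_and, Set.mem_ofPred_eq] at hs ⊢
          rw [card_image_sumElim, hs]
        · intro s _ s' _ h
          have h₁ := congrArg (· ∘ Sum.inl) h
          have h₂ := congrArg (· ∘ Sum.inr) h
          simp only [Sum.elim_comp_inl, Sum.elim_comp_inr] at h₁ h₂
          exact Prod.ext (DFunLike.coe_injective h₁) (DFunLike.coe_injective h₂)
    _ ≤ _ := by
        simpa [two_mul] using
          card_filter_card_image_eq_le (α := Fin R ⊕ Fin R) (β := Fin N) (2 * R - t)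

theorem tendsto_div_pow_atTop_of_isBigO {f : ℕ → ℝ} {a b : ℕ}
    (hf : f =O[atTop] fun N => (N : ℝ) ^ a) (hab : a < b) :
    Tendsto (fun N => f N / (N : ℝ) ^ b) atTop (𝓝 0) :=
  (hf.trans_isLittleO ((Asymptotics.isLittleO_pow_pow_atTop_of_lt hab).comp_tendsto
    tendsto_natCast_atTop_atTop)).tendsto_div_nhds_zero

section Moments

variable {Ω : Type*} [MeasurableSpace Ω] {μ : Measure Ω}

theorem integral_mem_Icc_zero_one [IsProbabilityMeasure μ] {f : Ω → ℝ}
    (hf : ∀ ω, f ω ∈ Set.Icc (0 : ℝ) 1) : ∫ ω, f ω ∂μ ∈ Set.Icc (0 : ℝ) 1 := by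
  refine ⟨integral_nonneg fun ω => (hf ω).1, (le_abs_self _).trans ?_⟩
  have hnorm : ∀ ω, ‖f ω‖ ≤ 1 := fun ω => by
    rw [Real.norm_of_nonneg (hf ω).1]; exact (hf ω).2
  simpa using norm_integral_le_of_norm_le_const (μ := μ) (ae_of_all _ hnorm)

theorem abs_cov_le_one [IsProbabilityMeasure μ] {X Z : Ω → ℝ}
    (hX : ∀ ω, X ω ∈ Set.Icc (0 : ℝ) 1) (hZ : ∀ ω, Z ω ∈ Set.Icc (0 : ℝ) 1) :
    |cov μ X Z| ≤ 1 := by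
  have hXZ := integral_mem_Icc_zero_one (μ := μ) fun ω =>
    ⟨mul_nonneg (hX ω).1 (hZ ω).1, mul_le_one₀ (hX ω).2 (hZ ω).1 (hZ ω).2⟩
  obtain ⟨hX₀, hX₁⟩ := integral_mem_Icc_zero_one (μ := μ) hX
  obtain ⟨hZ₀, hZ₁⟩ := integral_mem_Icc_zero_one (μ := μ) hZ
  exact abs_sub_le_of_nonneg_of_le hXZ.1 hXZ.2 (mul_nonneg hX₀ hZ₀) (mul_le_one₀ hX₁ hZ₀ hZ₁)

theorem cov_eq_zero_of_indepFun {X Z : Ω → ℝ} (h : IndepFun X Z μ)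
    (hX : AEStronglyMeasurable X μ) (hZ : AEStronglyMeasurable Z μ) : cov μ X Z = 0 := by
  rw [cov, ← h.integral_mul_eq_mul_integral hX hZ]
  exact sub_self _

end Moments

def sortedPairsOn (A : Finset ℕ) : Set {q : ℕ × ℕ // q.1 < q.2} :=
  {q | q.1.1 ∈ A ∧ q.1.2 ∈ A}

theorem disjoint_sortedPairsOn {A B : Finset ℕ} (h : #(A ∩ B) ≤ 1) :
    Disjoint (sortedPairsOn A) (sortedPairsOn B) := by
  rw [Set.disjoint_left]
  rintro ⟨⟨a, b⟩, hab⟩ ⟨ha, hb⟩ ⟨ha', hb'⟩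
  have : 1 < #(A ∩ B) :=
    one_lt_card.2 ⟨a, mem_inter.2 ⟨ha, ha'⟩, b, mem_inter.2 ⟨hb, hb'⟩, hab.ne⟩
  omega

section EdgeVariables

variable {Ω : Type*} {Y : ℕ → ℕ → Ω → ℝ}

theorem measurable_iSup_comap_sortedPairsOn (hYsymm : ∀ i j, Y i j = Y j i) {A : Finset ℕ}
    {a b : ℕ} (ha : a ∈ A) (hb : b ∈ A) (hab : a ≠ b) :
    Measurable[⨆ q ∈ sortedPairsOn A, MeasurableSpace.comap (Y q.1.1 q.1.2) inferInstance]
      (Y a b) := by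
  wlog h : a < b generalizing a b
  · rw [hYsymm]; exact this hb ha hab.symm (by omega)
  exact (comap_measurable (Y a b)).mono
    (le_iSup₂ (f := fun q (_ : q ∈ sortedPairsOn A) =>
      MeasurableSpace.comap (Y q.1.1 q.1.2) inferInstance) ⟨(a, b), h⟩ ⟨ha, hb⟩) le_rfl

theorem measurable_iSup_comap_psiY [MeasurableSpace Ω] (hYsymm : ∀ i j, Y i j = Y j i)
    {R N : ℕ} (H : SimpleGraph (Fin R)) (s : Fin R ↪ Fin N) :
    Measurable[⨆ q ∈ sortedPairsOn ((univ.image s).map Fin.valEmbedding),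
      MeasurableSpace.comap (Y q.1.1 q.1.2) inferInstance] (PsiY H Y s) := by
  refine Finset.measurable_prod _ fun q hq => ?_
  refine measurable_iSup_comap_sortedPairsOn hYsymm (by simp) (by simp) ?_
  exact Fin.val_injective.ne (s.injective.ne (mem_filter.1 hq).2.1.ne)

theorem indepFun_psiY [MeasurableSpace Ω] {μ : Measure Ω} (hYmeas : ∀ i j, Measurable (Y i j))
    (hYsymm : ∀ i j, Y i j = Y j i)
    (hindep : iIndepFun (fun q : {q : ℕ × ℕ // q.1 < q.2} => Y q.1.1 q.1.2) μ)
    {R N : ℕ} (H : SimpleGraph (Fin R)) {s₁ s₂ : Fin R ↪ Fin N}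
    (h : #(univ.image s₁ ∩ univ.image s₂) ≤ 1) :
    IndepFun (PsiY H Y s₁) (PsiY H Y s₂) μ := by
  have hdisj : Disjoint (sortedPairsOn ((univ.image s₁).map Fin.valEmbedding))
      (sortedPairsOn ((univ.image s₂).map Fin.valEmbedding)) :=
    disjoint_sortedPairsOn (by rwa [← map_inter, card_map])
  have hσ := indep_iSup_of_disjoint (fun q => (hYmeas _ _).comap_le)
    ((iIndepFun_iff_iIndep _ _ _).1 hindep) hdisj
  rw [IndepFun_iff_Indep]
  exact indep_of_indep_of_le_right
    (indep_of_indep_of_le_left hσ (measurable_iSup_comap_psiY hYsymm H s₁).comap_le)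
    (measurable_iSup_comap_psiY hYsymm H s₂).comap_le

theorem psiY_mem_Icc (hY01 : ∀ i j ω, Y i j ω = 0 ∨ Y i j ω = 1) {R N : ℕ}
    (H : SimpleGraph (Fin R)) (s : Fin R ↪ Fin N) (ω : Ω) :
    PsiY H Y s ω ∈ Set.Icc (0 : ℝ) 1 := by
  have hmem : ∀ i j, Y i j ω ∈ Set.Icc (0 : ℝ) 1 := fun i j => by
    rcases hY01 i j ω with h | h <;> simp [h]
  exact ⟨prod_nonneg fun q _ => (hmem _ _).1, prod_le_one (fun q _ => (hmem _ _).1)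
    fun q _ => (hmem _ _).2⟩

theorem measurable_psiY [MeasurableSpace Ω] (hYmeas : ∀ i j, Measurable (Y i j)) {R N : ℕ}
    (H : SimpleGraph (Fin R)) (s : Fin R ↪ Fin N) : Measurable (PsiY H Y s) :=
  Finset.measurable_prod _ fun _ _ => hYmeas _ _

end EdgeVariables

theorem covariance_sum_vanishes_general
    {Ω : Type*} [MeasurableSpace Ω] (μ : Measure Ω) [IsProbabilityMeasure μ]
    (Y : ℕ → ℕ → Ω → ℝ)
    (hYmeas : ∀ i j, Measurable (Y i j))
    (hYsymm : ∀ i j, Y i j = Y j i)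
    (hY01 : ∀ i j ω, Y i j ω = 0 ∨ Y i j ω = 1)
    (hindep : iIndepFun
      (fun q : {q : ℕ × ℕ // q.1 < q.2} => Y q.1.1 q.1.2) μ)
    (R : ℕ)
    (H : SimpleGraph (Fin R)) :
    ∀ t : ℕ, t ≤ R →
      Tendsto
        (fun N : ℕ =>
          (∑ s ∈ (Finset.univ : Finset ((Fin R ↪ Fin N) × (Fin R ↪ Fin N))).filter
              (fun s => ((Finset.univ.image s.1) ∩ (Finset.univ.image s.2)).card = t),
            cov μ (PsiY H Y s.1) (PsiY H Y s.2)) / (N:ℝ) ^ (2*R - 1))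
        atTop (𝓝 0) := by
  intro t htR
  rcases le_or_gt t 1 with ht | ht
  · refine tendsto_const_nhds.congr fun N => ?_
    rw [sum_eq_zero fun s hs => ?_, zero_div]
    exact cov_eq_zero_of_indepFun
      (indepFun_psiY hYmeas hYsymm hindep H ((mem_filter.1 hs).2 ▸ ht))
      (measurable_psiY hYmeas H s.1).aestronglyMeasurable
      (measurable_psiY hYmeas H s.2).aestronglyMeasurable
  · refine tendsto_div_pow_atTop_of_isBigO (a := 2 * R - t) ?_ (by omega)
    refine Asymptotics.IsBigO.of_bound (((2 * R - t) ^ (2 * R) : ℕ) : ℝ)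
      (Eventually.of_forall fun N => ?_)
    refine (norm_sum_le _ _).trans <| (sum_le_card_nsmul _ _ 1 fun s _ =>
      abs_cov_le_one (psiY_mem_Icc hY01 H s.1) (psiY_mem_Icc hY01 H s.2)).trans ?_
    rw [nsmul_one, Real.norm_of_nonneg (by positivity), mul_comm]
    exact_mod_cast card_embedding_pairs_overlap_le R N t

/-- Lemma A.1: for every overlap size `t`, the normalized sum over `E_t` of the
covariances of `Ψ_H(Y_N, s₁)` and `Ψ_H(Y_N, s₂)` tends to `0`. -/
theorem covariance_sum_vanishes
    {Ω : Type*} [MeasurableSpace Ω] (μ : Measure Ω) [IsProbabilityMeasure μ]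
    (K : ℕ) (hK : 2 ≤ K)
    (Pi : Fin K → Fin K → ℝ)
    (hPisymm : ∀ i j, Pi i j = Pi j i)
    (hPimem : ∀ i j, Pi i j ∈ Set.Icc (0:ℝ) 1)
    (c : ℝ) (hc0 : 0 < c) (hc1 : c ≤ 1)
    (hPidiag : ∃ i, c ≤ Pi i i)
    (α : ℕ → Fin K)
    (lam : Fin K → ℝ)
    (hlam : ∀ k, lam k ∈ Set.Ioo (0:ℝ) 1)
    (hlamsum : ∑ k, lam k = 1)
    (hlamlim : ∀ k, Tendsto
      (fun N : ℕ => (((Finset.range N).filter (fun i => α i = k)).card : ℝ) / N)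
      atTop (𝓝 (lam k)))
    (Y : ℕ → ℕ → Ω → ℝ)
    (hYmeas : ∀ i j, Measurable (Y i j))
    (hYsymm : ∀ i j, Y i j = Y j i)
    (hYdiag : ∀ i, Y i i = 0)
    (hY01 : ∀ i j ω, Y i j ω = 0 ∨ Y i j ω = 1)
    (hYdist : ∀ i j, i < j → μ {ω | Y i j ω = 1} = ENNReal.ofReal (Pi (α i) (α j)))
    (hindep : iIndepFun
      (fun q : {q : ℕ × ℕ // q.1 < q.2} => Y q.1.1 q.1.2) μ)
    (R : ℕ) (hR : 2 ≤ R)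
    (H : SimpleGraph (Fin R)) (hconn : H.Connected) :
    ∀ t : ℕ, t ≤ R →
      Tendsto
        (fun N : ℕ =>
          (∑ s ∈ (Finset.univ : Finset ((Fin R ↪ Fin N) × (Fin R ↪ Fin N))).filter
              (fun s => ((Finset.univ.image s.1) ∩ (Finset.univ.image s.2)).card = t),
            cov μ (PsiY H Y s.1) (PsiY H Y s.2)) / (N:ℝ) ^ (2*R - 1))
        atTop (𝓝 0) :=
  covariance_sum_vanishes_general μ Y hYmeas hYsymm hY01 hindep R H

end
end

section
/- Under assumptions (A.1)–(A.4), for every fixed simple undirected connected graph H on vertex set [R] and every p ∈ (0,1), the asymptotic variances of both sampling schemes are strictly positive: (σ^{[1]}(H,p))² = (1/p − 1) Σ_{u₁=1}^K λ_{u₁} [Σ_{k=1}^R η(u₁,k;H,Π,λ)]² > 0 and (σ^{[2]}(H,p))² = (p(1−p)/f(H,p)²) Σ_{u₁=1}^K λ_{u₁} [Σ_{k=1}^R δ_k(H,p)·η(u₁,k;H,Π,λ)]² > 0. In particular, with j₀ a class index with π_{j₀,j₀} > 0, the first sum is at least λ_{j₀}^{2R−1} π_{j₀,j₀}^{2|E(H)|}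 > 0, and in the ego-centric case Σ_{k=1}^R δ_k(H,p) ≥ p^{R−1}(1−p) > 0. -/
open Finset
open scoped Classical

noncomputable section

/-- Number of edges of `H`. -/
def edgeCount {R : ℕ} (H : SimpleGraph (Fin R)) : ℕ :=
  (Finset.univ.filter (fun q : Fin R × Fin R => H.Adj q.1 q.2 ∧ q.1 < q.2)).card

/-- `Ψ_H(Π,u) = ∏_{{i,j}∈E(H)} π_{u_i,u_j}`. -/
def Psi {K R : ℕ} (H : SimpleGraph (Fin R)) (Pi : Fin K → Fin K → ℝ)
    (u : Fin R → Fin K) : ℝ :=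
  edgeProd H (fun i j => Pi (u i) (u j))

/-- `η(u₁,k;H,Π,λ)`. -/
def eta {K R : ℕ} [NeZero R] (H : SimpleGraph (Fin R)) (Pi : Fin K → Fin K → ℝ)
    (lam : Fin K → ℝ) (u1 : Fin K) (k : Fin R) : ℝ :=
  ∑ u ∈ Finset.univ.filter (fun u : Fin R → Fin K => u 0 = u1),
    Psi H Pi (u ∘ Equiv.swap 0 k) * ∏ i ∈ Finset.univ.erase (0 : Fin R), lam (u i)

/-- Probability weight of the configuration `w` for R i.i.d. Bernoulli(p) variables. -/
def bernWeight {R : ℕ} (p : ℝ) (w : Fin R → Bool) : ℝ :=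
  ∏ i, (if w i then p else 1 - p)

/-- `f(H,p)`, written out as a finite sum over the configurations of the i.i.d.
Bernoulli(p) variables `W̃_1,…,W̃_R`. -/
def fHp {R : ℕ} (H : SimpleGraph (Fin R)) (p : ℝ) : ℝ :=
  ∑ w : Fin R → Bool, bernWeight p w *
    edgeProd H (fun i j => if w i || w j then (1:ℝ) else 0)

/-- `δ_r(H,p)`, written out as a finite sum over the configurations of `W̃_1,…,W̃_R`. -/
def deltaHp {R : ℕ} (H : SimpleGraph (Fin R)) (p : ℝ) (r : Fin R) : ℝ :=
  ∑ w : Fin R → Bool, bernWeight p w *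
    ((∏ q ∈ Finset.univ.filter
        (fun q : Fin R × Fin R => H.Adj q.1 q.2 ∧ q.1 < q.2 ∧ q.1 ≠ r ∧ q.2 ≠ r),
        (if w q.1 || w q.2 then (1:ℝ) else 0)) *
      (1 - ∏ v ∈ Finset.univ.filter (fun v => H.Adj v r), (if w v then (1:ℝ) else 0)))


section Helpers

variable {K R : ℕ}

lemma edgeProd_nonneg (H : SimpleGraph (Fin R)) {f : Fin R → Fin R → ℝ}
    (hf : ∀ i j, 0 ≤ f i j) : 0 ≤ edgeProd H f :=
  Finset.prod_nonneg fun q _ => hf q.1 q.2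

lemma Psi_nonneg (H : SimpleGraph (Fin R)) {Pi : Fin K → Fin K → ℝ}
    (hPi : ∀ i j, 0 ≤ Pi i j) (u : Fin R → Fin K) : 0 ≤ Psi H Pi u :=
  edgeProd_nonneg H fun i j => hPi (u i) (u j)

lemma eta_nonneg [NeZero R] (H : SimpleGraph (Fin R)) {Pi : Fin K → Fin K → ℝ}
    (hPi : ∀ i j, 0 ≤ Pi i j) {lam : Fin K → ℝ} (hlam : ∀ k, 0 ≤ lam k)
    (u1 : Fin K) (k : Fin R) : 0 ≤ eta H Pi lam u1 k :=
  Finset.sum_nonneg fun u _ => mul_nonneg (Psi_nonneg H hPi _)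
    (Finset.prod_nonneg fun i _ => hlam _)

lemma eta_lb [NeZero R] (H : SimpleGraph (Fin R)) {Pi : Fin K → Fin K → ℝ}
    (hPi : ∀ i j, 0 ≤ Pi i j) {lam : Fin K → ℝ} (hlam : ∀ k, 0 ≤ lam k)
    (j0 : Fin K) (k : Fin R) :
    lam j0 ^ (R - 1) * Pi j0 j0 ^ edgeCount H ≤ eta H Pi lam j0 k := by
  have hmem : (fun _ : Fin R => j0) ∈
      Finset.univ.filter (fun u : Fin R → Fin K => u 0 = j0) := by simp
  have hle := Finset.single_le_sum (f := fun u : Fin R → Fin K =>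
      Psi H Pi (u ∘ Equiv.swap 0 k) * ∏ i ∈ Finset.univ.erase (0 : Fin R), lam (u i))
    (fun u _ => mul_nonneg (Psi_nonneg H hPi _)
      (Finset.prod_nonneg fun i _ => hlam _)) hmem
  refine le_trans (le_of_eq ?_) hle
  beta_reduce
  have h1 : ((fun _ : Fin R => j0) ∘ Equiv.swap 0 k) = fun _ => j0 := rfl
  have h2 : Psi H Pi (fun _ => j0) = Pi j0 j0 ^ edgeCount H := by
    rw [Psi, edgeProd, Finset.prod_const, edgeCount]
  have h3 : (∏ _i ∈ Finset.univ.erase (0 : Fin R), lam j0) = lam j0 ^ (R - 1) := by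
    rw [Finset.prod_const, Finset.card_erase_of_mem (Finset.mem_univ _),
      Finset.card_univ, Fintype.card_fin]
  rw [h1, h2, h3, mul_comm]

lemma bernWeight_nonneg {p : ℝ} (hp0 : 0 ≤ p) (hp1 : p ≤ 1) (w : Fin R → Bool) :
    0 ≤ bernWeight p w :=
  Finset.prod_nonneg fun i _ => by split <;> linarith

lemma deltaHp_nonneg {p : ℝ} (hp0 : 0 ≤ p) (hp1 : p ≤ 1)
    (H : SimpleGraph (Fin R)) (r : Fin R) : 0 ≤ deltaHp H p r := by
  refine Finset.sum_nonneg fun w _ =>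
    mul_nonneg (bernWeight_nonneg hp0 hp1 w) (mul_nonneg ?_ ?_)
  · exact Finset.prod_nonneg fun q _ => by split <;> norm_num
  · have h : (∏ v ∈ Finset.univ.filter (fun v => H.Adj v r),
        (if w v then (1:ℝ) else 0)) ≤ 1 :=
      Finset.prod_le_one (fun v _ => by split <;> norm_num)
        (fun v _ => by split <;> norm_num)
    linarith

lemma fHp_lb {p : ℝ} (hp0 : 0 ≤ p) (hp1 : p ≤ 1) (H : SimpleGraph (Fin R)) :
    p ^ R ≤ fHp H p := by
  have hle := Finset.single_le_sum (f := fun w : Fin R → Bool => bernWeight p w *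
      edgeProd H (fun i j => if w i || w j then (1:ℝ) else 0))
    (fun w _ => mul_nonneg (bernWeight_nonneg hp0 hp1 w)
      (edgeProd_nonneg H fun i j => by split <;> norm_num))
    (Finset.mem_univ (fun _ : Fin R => true))
  refine le_trans (le_of_eq ?_) hle
  beta_reduce
  have h1 : bernWeight p (fun _ : Fin R => true) = p ^ R := by
    rw [bernWeight]
    simp [Finset.prod_const, Finset.card_univ]
  have h2 : edgeProd H (fun i j =>
      if (fun _ : Fin R => true) i || (fun _ : Fin R => true) j then (1:ℝ) else 0) = 1 :=
    Finset.prod_eq_one fun q _ => by simp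
  rw [h1, h2, mul_one]

lemma deltaHp_lb {p : ℝ} (hp0 : 0 ≤ p) (hp1 : p ≤ 1) (H : SimpleGraph (Fin R))
    {r v0 : Fin R} (hadj : H.Adj v0 r) :
    p ^ (R - 1) * (1 - p) ≤ deltaHp H p r := by
  set w : Fin R → Bool := fun i => decide (i ≠ v0) with hw
  have hle := Finset.single_le_sum (f := fun w : Fin R → Bool => bernWeight p w *
      ((∏ q ∈ Finset.univ.filter
          (fun q : Fin R × Fin R => H.Adj q.1 q.2 ∧ q.1 < q.2 ∧ q.1 ≠ r ∧ q.2 ≠ r),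
          (if w q.1 || w q.2 then (1:ℝ) else 0)) *
        (1 - ∏ v ∈ Finset.univ.filter (fun v => H.Adj v r), (if w v then (1:ℝ) else 0))))
    (fun w _ => mul_nonneg (bernWeight_nonneg hp0 hp1 w) (mul_nonneg
      (Finset.prod_nonneg fun q _ => by split <;> norm_num)
      (by
        have h : (∏ v ∈ Finset.univ.filter (fun v => H.Adj v r),
            (if w v then (1:ℝ) else 0)) ≤ 1 :=
          Finset.prod_le_one (fun v _ => by split <;> norm_num)
            (fun v _ => by split <;> norm_num)
        linarith)))
    (Finset.mem_univ w)
  refine le_trans (le_of_eq ?_) hle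
  beta_reduce
  have hb : bernWeight p w = p ^ (R - 1) * (1 - p) := by
    rw [bernWeight, ← Finset.mul_prod_erase Finset.univ _ (Finset.mem_univ v0)]
    have h1 : (if w v0 then p else 1 - p) = 1 - p := by simp [hw]
    have h2 : (∏ i ∈ Finset.univ.erase v0, (if w i then p else 1 - p)) = p ^ (R - 1) := by
      rw [Finset.prod_congr rfl (fun i hi => ?_), Finset.prod_const,
        Finset.card_erase_of_mem (Finset.mem_univ _), Finset.card_univ, Fintype.card_fin]
      have : i ≠ v0 := Finset.ne_of_mem_erase hi
      simp [hw, this]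
    rw [h1, h2, mul_comm]
  have hprod1 : (∏ q ∈ Finset.univ.filter
      (fun q : Fin R × Fin R => H.Adj q.1 q.2 ∧ q.1 < q.2 ∧ q.1 ≠ r ∧ q.2 ≠ r),
      (if w q.1 || w q.2 then (1:ℝ) else 0)) = 1 := by
    refine Finset.prod_eq_one fun q hq => ?_
    rw [Finset.mem_filter] at hq
    have hne : q.1 ≠ q.2 := ne_of_lt hq.2.2.1
    by_cases h : q.1 = v0
    · have : q.2 ≠ v0 := fun h2 => hne (h.trans h2.symm)
      simp [hw, this]
    · simp [hw, h]
  have hprod2 : (∏ v ∈ Finset.univ.filter (fun v => H.Adj v r),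
      (if w v then (1:ℝ) else 0)) = 0 := by
    refine Finset.prod_eq_zero (i := v0) ?_ ?_
    · rw [Finset.mem_filter]; exact ⟨Finset.mem_univ _, hadj⟩
    · simp [hw]
  rw [hb, hprod1, hprod2]
  ring

lemma exists_neighbor {R : ℕ} (hR : 2 ≤ R) (H : SimpleGraph (Fin R))
    (hconn : H.Connected) (r : Fin R) : ∃ v0, H.Adj v0 r := by
  obtain ⟨s, hs⟩ : ∃ s : Fin R, s ≠ r := by
    rcases eq_or_ne r ⟨0, by omega⟩ with h | h
    · refine ⟨⟨1, by omega⟩, ?_⟩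
      rw [h]; intro hc
      exact one_ne_zero (congrArg Fin.val hc)
    · exact ⟨⟨0, by omega⟩, fun hc => h (hc ▸ rfl)⟩
  obtain ⟨wlk⟩ := hconn.preconnected r s
  have hnn : ¬ wlk.Nil := SimpleGraph.Walk.not_nil_of_ne (fun h => hs h.symm)
  exact ⟨wlk.getVert 1, (SimpleGraph.Walk.adj_snd hnn).symm⟩

end Helpers

set_option maxHeartbeats 800000 in
/-- Lemma A.4: under (A.2)-(A.4), the asymptotic variances of the induced and the
ego-centric subgraph-count CLTs are strictly positive, with the indicated explicit
lower bounds. -/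
theorem asymptotic_variances_positive
    (K : ℕ) (hK : 2 ≤ K)
    (Pi : Fin K → Fin K → ℝ)
    (hPisymm : ∀ i j, Pi i j = Pi j i)
    (hPimem : ∀ i j, Pi i j ∈ Set.Icc (0:ℝ) 1)
    (c : ℝ) (hc0 : 0 < c) (hc1 : c ≤ 1)
    (hPidiag : ∃ i, c ≤ Pi i i)
    (lam : Fin K → ℝ)
    (hlam : ∀ k, lam k ∈ Set.Ioo (0:ℝ) 1)
    (hlamsum : ∑ k, lam k = 1)
    (p : ℝ) (hp0 : 0 < p) (hp1 : p < 1)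
    (R : ℕ) [NeZero R] (hR : 2 ≤ R)
    (H : SimpleGraph (Fin R)) (hconn : H.Connected) :
    -- strict positivity of (σ^{[1]}(H,p))²
    (0 < (1/p - 1) * ∑ u1, lam u1 * (∑ k, eta H Pi lam u1 k) ^ 2)
    ∧
    -- strict positivity of (σ^{[2]}(H,p))²
    (0 < (p * (1 - p) / (fHp H p) ^ 2) *
      ∑ u1, lam u1 * (∑ k, deltaHp H p k * eta H Pi lam u1 k) ^ 2)
    ∧
    -- explicit lower bound for the first sum
    (∀ j0 : Fin K, 0 < Pi j0 j0 →
      lam j0 ^ (2*R - 1) * Pi j0 j0 ^ (2 * edgeCount H) ≤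
        ∑ u1, lam u1 * (∑ k, eta H Pi lam u1 k) ^ 2)
    ∧
    -- lower bound for Σ_k δ_k(H,p) in the ego-centric case
    (p ^ (R - 1) * (1 - p) ≤ ∑ k, deltaHp H p k) := by
  obtain ⟨i0, hi0⟩ := hPidiag
  have hPinn : ∀ i j, 0 ≤ Pi i j := fun i j => (hPimem i j).1
  have hlamnn : ∀ k, 0 ≤ lam k := fun k => le_of_lt (hlam k).1
  have hC3 : ∀ j0 : Fin K, 0 < Pi j0 j0 →
      lam j0 ^ (2*R - 1) * Pi j0 j0 ^ (2 * edgeCount H) ≤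
        ∑ u1, lam u1 * (∑ k, eta H Pi lam u1 k) ^ 2 := by
    intro j0 hj0
    have hmnn : (0:ℝ) ≤ lam j0 ^ (R-1) * Pi j0 j0 ^ edgeCount H :=
      mul_nonneg (pow_nonneg (hlamnn j0) _) (pow_nonneg (hPinn j0 j0) _)
    have hsum : lam j0 ^ (R-1) * Pi j0 j0 ^ edgeCount H ≤ ∑ k, eta H Pi lam j0 k :=
      le_trans (eta_lb H hPinn hlamnn j0 0)
        (Finset.single_le_sum (f := fun k => eta H Pi lam j0 k)
          (fun k _ => eta_nonneg H hPinn hlamnn j0 k) (Finset.mem_univ 0))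
    have hsq : (lam j0 ^ (R-1) * Pi j0 j0 ^ edgeCount H) ^ 2 ≤
        (∑ k, eta H Pi lam j0 k) ^ 2 := pow_le_pow_left₀ hmnn hsum 2
    have key : lam j0 ^ (2*R-1) * Pi j0 j0 ^ (2*edgeCount H) =
        lam j0 * (lam j0 ^ (R-1) * Pi j0 j0 ^ edgeCount H) ^ 2 := by
      rw [mul_pow, ← pow_mul, ← pow_mul]
      have h1 : 2*R - 1 = 1 + (R-1)*2 := by omega
      have h2 : 2 * edgeCount H = edgeCount H * 2 := by ring
      rw [h1, h2, pow_add, pow_one, mul_assoc]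
    rw [key]
    calc lam j0 * (lam j0 ^ (R-1) * Pi j0 j0 ^ edgeCount H) ^ 2
        ≤ lam j0 * (∑ k, eta H Pi lam j0 k)^2 :=
          mul_le_mul_of_nonneg_left hsq (hlamnn j0)
      _ ≤ ∑ u1, lam u1 * (∑ k, eta H Pi lam u1 k) ^ 2 :=
          Finset.single_le_sum (f := fun u1 => lam u1 * (∑ k, eta H Pi lam u1 k) ^ 2)
            (fun u1 _ => mul_nonneg (hlamnn u1) (sq_nonneg _)) (Finset.mem_univ j0)
  have hPii0 : 0 < Pi i0 i0 := lt_of_lt_of_le hc0 hi0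
  have hcoef1 : 0 < 1/p - 1 := by
    have := one_lt_one_div hp0 hp1
    linarith
  have hS1 : 0 < ∑ u1, lam u1 * (∑ k, eta H Pi lam u1 k) ^ 2 :=
    lt_of_lt_of_le (mul_pos (pow_pos (hlam i0).1 _) (pow_pos hPii0 _)) (hC3 i0 hPii0)
  obtain ⟨v0, hv0⟩ := exists_neighbor hR H hconn (0 : Fin R)
  have hC4 : p ^ (R-1) * (1-p) ≤ ∑ k, deltaHp H p k :=
    le_trans (deltaHp_lb hp0.le hp1.le H hv0)
      (Finset.single_le_sum (f := fun k => deltaHp H p k)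
        (fun k _ => deltaHp_nonneg hp0.le hp1.le H k) (Finset.mem_univ 0))
  have hf : 0 < fHp H p := lt_of_lt_of_le (pow_pos hp0 R) (fHp_lb hp0.le hp1.le H)
  have hcoef2 : 0 < p * (1-p) / (fHp H p)^2 :=
    div_pos (mul_pos hp0 (by linarith)) (pow_pos hf 2)
  have hmpos : 0 < lam i0 ^ (R-1) * Pi i0 i0 ^ edgeCount H :=
    mul_pos (pow_pos (hlam i0).1 _) (pow_pos hPii0 _)
  have hinner : (lam i0 ^ (R-1) * Pi i0 i0 ^ edgeCount H) * (p ^ (R-1) * (1-p)) ≤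
      ∑ k, deltaHp H p k * eta H Pi lam i0 k := by
    calc (lam i0 ^ (R-1) * Pi i0 i0 ^ edgeCount H) * (p ^ (R-1)*(1-p))
        ≤ (lam i0 ^ (R-1) * Pi i0 i0 ^ edgeCount H) * ∑ k, deltaHp H p k :=
          mul_le_mul_of_nonneg_left hC4 hmpos.le
      _ = ∑ k, (lam i0 ^ (R-1) * Pi i0 i0 ^ edgeCount H) * deltaHp H p k := by
          rw [Finset.mul_sum]
      _ ≤ ∑ k, deltaHp H p k * eta H Pi lam i0 k := by
          refine Finset.sum_le_sum fun k _ => ?_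
          rw [mul_comm]
          exact mul_le_mul_of_nonneg_left (eta_lb H hPinn hlamnn i0 k)
            (deltaHp_nonneg hp0.le hp1.le H k)
  have hinnerpos : 0 < ∑ k, deltaHp H p k * eta H Pi lam i0 k :=
    lt_of_lt_of_le (mul_pos hmpos (mul_pos (pow_pos hp0 _) (by linarith))) hinner
  have hS2 : 0 < ∑ u1, lam u1 * (∑ k, deltaHp H p k * eta H Pi lam u1 k) ^ 2 :=
    lt_of_lt_of_le (mul_pos (hlam i0).1 (pow_pos hinnerpos 2))
      (Finset.single_le_sum (f := fun u1 => lam u1 * (∑ k, deltaHp H p k * eta H Pi lam u1 k) ^ 2)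
        (fun u1 _ => mul_nonneg (hlamnn u1) (sq_nonneg _)) (Finset.mem_univ i0))
  exact ⟨mul_pos hcoef1 hS1, mul_pos hcoef2 hS2, hC3, hC4⟩

end
end
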